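/- Write g(x) = ∑_{n ≥ 0} a_n x^n with a_n ∈ R. Then for all n ≥ 0: a_{2n+1} = 0, and a_{2n} = (−aq;q²)_n (−dq;q²)_n / ((q²;q²)_n (cq;q²)_n), where (q²;q²)_n (cq;q²)_n is invertible in R since it has constant term 1. -/

import Mathlib

open Finset PowerSeries

namespace Primc

/-- Colours: `0 = a`, `1 = b`, `2 = c`, `3 = d`. -/
abbrev Colour := Fin 4

/-- A coloured part `k_z`: an underlying integer `k` together with its colour `z`. -/
abbrev CPart := ℕ × Colour

/-- The matrix `D` of minimal differences, with rows and columns indexed by the colours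
`a, b, c, d` in this order. -/
def Dmat : Colour → Colour → ℕ := ![![2,1,2,2], ![1,0,1,1], ![0,1,0,2], ![0,1,0,2]]

/-- The position of a coloured part in the total order
`1_a < 1_b < 1_c < 1_d < 2_a < 2_b < 2_c < 2_d < ⋯`. -/
def pos (p : CPart) : ℕ := 4 * p.1 + (p.2 : ℕ)

/-- A Primc partition: a finite sequence of coloured positive integers, non-increasing in the
above total order, in which consecutive parts `λ_i, λ_{i+1}` of colours `x, y` satisfy
`λ_i − λ_{i+1} ≥ D(x,y)`. -/
def IsPrimc (l : List CPart) : Prop :=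
  (∀ p ∈ l, 1 ≤ p.1) ∧
  l.Chain' fun p r => pos r ≤ pos p ∧ r.1 + Dmat p.2 r.2 ≤ p.1

/-- The weight of a coloured partition: the sum of the underlying integers of its parts. -/
def wt (l : List CPart) : ℕ := (l.map Prod.fst).sum

/-- The number of parts of colour `z`. -/
def nc (l : List CPart) (z : Colour) : ℕ := l.countP fun p => p.2 == z

/-- `R₀ = ℤ[a,c,d]`, with `a = X 0`, `c = X 1`, `d = X 2`. -/
abbrev R0 := MvPolynomial (Fin 3) ℤ

/-- `R = ℤ[a,c,d][[q]]`. -/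
abbrev R := PowerSeries R0

/-- The variable `q`. -/
noncomputable def qq : R := PowerSeries.X

/-- The variable `a`. -/
noncomputable def av : R0 := MvPolynomial.X 0

/-- The variable `c`. -/
noncomputable def cv : R0 := MvPolynomial.X 1

/-- The variable `d`. -/
noncomputable def dv : R0 := MvPolynomial.X 2

/-- The monomial `a^{#(a-parts)} c^{#(c-parts)} d^{#(d-parts)}` attached to a coloured
partition. -/
noncomputable def mono (l : List CPart) : R0 := av ^ nc l 0 * cv ^ nc l 2 * dv ^ nc l 3

/-- The infinite product `∏_{j ≥ 0} f j`, defined coefficientwise: the coefficient of `qⁿ` is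
the corresponding coefficient of the partial product `∏_{j ≤ n} f j`.  This agrees with the
usual (coefficientwise convergent) infinite product whenever the factor `f j` is `≡ 1`
modulo `q^{j+1}`, as is the case for all products appearing here. -/
noncomputable def iprod (f : ℕ → R) : R :=
  PowerSeries.mk fun n => PowerSeries.coeff n (∏ j ∈ Finset.range (n + 1), f j)

/-- The largest part of a Primc partition (its parts being written in non-increasing order),
with the convention that the empty partition has largest part `0_b`. -/
def top (l : List CPart) : CPart := l.headD (0, 1)

/-- `G_{k_x} ∈ R`: the sum of `q^{|λ|} a^{#(a-parts)} c^{#(c-parts)} d^{#(d-parts)}` over all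
Primc partitions `λ` whose largest part is at most `k_x` in the colour order. -/
noncomputable def G (k : ℕ) (x : Colour) : R :=
  PowerSeries.mk fun n =>
    ∑ᶠ lam : {l : List CPart // IsPrimc l ∧ wt l = n ∧ pos (top l) ≤ pos (k, x)}, mono lam.1

/-- `E_{k_x} ∈ R`: the sum of `q^{|λ|} a^{#(a-parts)} c^{#(c-parts)} d^{#(d-parts)}` over all
Primc partitions `λ` whose largest part is exactly `k_x` (so `E_{0_b} = 1`, the empty
partition having largest part `0_b` by convention). -/
noncomputable def E (k : ℕ) (x : Colour) : R :=
  PowerSeries.mk fun n =>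
    ∑ᶠ lam : {l : List CPart // IsPrimc l ∧ wt l = n ∧ top l = (k, x)}, mono lam.1

/-- `H_k = G_{k_d} (1 − q^{k+1})⁻¹ ∈ R` for `k ≥ 0`. -/
noncomputable def H (k : ℕ) : R := G k 3 * Ring.inverse (1 - qq ^ (k + 1))

/-- `f(x) = ∑_{k ≥ 0} H_{k−1} x^k ∈ R[[x]]`, with the convention `H_{−1} = 1`. -/
noncomputable def fser : PowerSeries R :=
  PowerSeries.mk fun k => if k = 0 then 1 else H (k - 1)
/-- `(−x;q)_∞ = ∏_{j ≥ 0} (1 + x q^j) ∈ R[[x]]`, defined coefficientwise: its coefficient of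
`xⁿ qᵐ` is the corresponding coefficient of the partial product `∏_{j ≤ m} (1 + x q^j)`
(factors with `j > m` cannot contribute to the coefficient of `qᵐ`). -/
noncomputable def negxq : PowerSeries R :=
  PowerSeries.mk fun n => PowerSeries.mk fun m =>
    PowerSeries.coeff m (PowerSeries.coeff n
      (∏ j ∈ Finset.range (m + 1), (1 + PowerSeries.X * PowerSeries.C (qq ^ j))))

/-- `g(x) = f(x)/(−x;q)_∞ ∈ R[[x]]`; the inverse of `(−x;q)_∞` (whose constant coefficient
is `1 ∈ R`) is given by `Ring.inverse`. -/
noncomputable def gser : PowerSeries R := fser * Ring.inverse negxq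

/-!
Removing the largest part `(k+1)_x` of a Primc partition leaves a Primc partition whose parts may
follow `(k+1)_x`.  Comparing these sets of "followers" for the four colours (those of `c` and `d`
coincide, and the followers of `(k+2)_a` are those of `(k+1)_b`) gives two linear recurrences
linking `H_k` with the generating functions `w_k` of the followers of `k_c`.  For `f` and
`w(x) = ∑ w_k x^k` these are two first-order `q`-difference equations, and eliminating `w` leaves
a second-order one for `f`.  Since `(−x;q)_∞ = (1 + x)(−qx;q)_∞`, dividing by `(−x;q)_∞` turns it
into `q(1 − x²) g(x) = (q + c + (a + d)q²x²) g(qx) + (adq³x² − c) g(q²x)`, that is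
`(1 − q^{n+2})(1 − cq^{n+1}) a_{n+2} = (1 + aq^{n+1})(1 + dq^{n+1}) a_n`, with `a_0 = 1` and
`a_1 = 0`.
-/

section PowerSeries

variable {A : Type*}

lemma isUnit_one_sub [CommRing A] {f : A⟦X⟧} (h : constantCoeff f = 0) :
    IsUnit (1 - f) := by
  simp [isUnit_iff_constantCoeff, h]

lemma rescale_C [CommSemiring A] (a r : A) : rescale a (C r) = C r := by
  ext n
  rcases n with _ | n <;> simp [coeff_C]

lemma constantCoeff_rescale [CommSemiring A] (a : A) (f : A⟦X⟧) :
    constantCoeff (rescale a f) = constantCoeff f := by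
  rw [← coeff_zero_eq_constantCoeff_apply, coeff_rescale, pow_zero, one_mul,
    coeff_zero_eq_constantCoeff_apply]

lemma eq_zero_of_forall_X_pow_dvd [CommSemiring A] {f : A⟦X⟧} (h : ∀ M, X ^ M ∣ f) :
    f = 0 := by
  ext m
  exact X_pow_dvd_iff.1 (h (m + 1)) m m.lt_succ_self

variable [CommRing A] {r : A} {F : A⟦X⟧}

lemma dvd_coeff_mul_left (h : ∀ n, r ∣ coeff n F) (P : A⟦X⟧) (n : ℕ) :
    r ∣ coeff n (P * F) := by
  rw [coeff_mul]
  exact Finset.dvd_sum fun p _ => dvd_mul_of_dvd_right (h p.2) _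

lemma dvd_coeff_rescale (h : ∀ n, r ∣ coeff n F) (a : A) (n : ℕ) :
    r ∣ coeff n (rescale a F) := by
  rw [coeff_rescale]
  exact dvd_mul_of_dvd_right (h n) _

end PowerSeries

section Recurrence

variable {M : Type*} {α β u : ℕ → M}

lemma prod_mul_eq_prod_mul_of_recurrence [CommMonoid M]
    (h : ∀ m, α m * u (m + 2) = β m * u m) (n : ℕ) :
    (∏ j ∈ range n, α (2 * j)) * u (2 * n) = (∏ j ∈ range n, β (2 * j)) * u 0 := by
  induction n with
  | zero => simp
  | succ n ih =>
    rw [prod_range_succ, prod_range_succ, mul_assoc, mul_add_one, h, mul_left_comm, ih]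
    ac_rfl

lemma odd_eq_zero_of_recurrence [MonoidWithZero M] (h : ∀ m, α m * u (m + 2) = β m * u m)
    (hα : ∀ m, IsUnit (α m)) (h₁ : u 1 = 0) (n : ℕ) : u (2 * n + 1) = 0 := by
  induction n with
  | zero => exact h₁
  | succ n ih =>
    have := h (2 * n + 1)
    rw [ih, mul_zero] at this
    exact (hα _).mul_right_eq_zero.1 this

end Recurrence

lemma pos_injective : Function.Injective pos := by
  rintro ⟨m, i⟩ ⟨m', i'⟩ h
  have : m = m' ∧ (i : ℕ) = i' := by simp only [pos] at h; omega
  simp [this.1, Fin.ext_iff, this.2]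

def CanFollow (k : ℕ) (x : Colour) (r : CPart) : Prop :=
  pos r ≤ pos (k, x) ∧ r.1 + Dmat x r.2 ≤ k

lemma isPrimc_cons_iff {p : CPart} {t : List CPart} :
    IsPrimc (p :: t) ↔ 1 ≤ p.1 ∧ CanFollow p.1 p.2 (top t) ∧ IsPrimc t := by
  obtain ⟨k, x⟩ := p
  cases t with
  | nil =>
    have hD : Dmat x 1 ≤ 1 := by revert x; decide
    simp only [IsPrimc, CanFollow, top, pos, List.headD_nil, List.mem_singleton, forall_eq,
      List.not_mem_nil, IsEmpty.forall_iff, implies_true, true_and, Fin.val_one]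
    constructor
    · rintro ⟨hk, -⟩
      exact ⟨hk, ⟨by omega, by omega⟩, List.IsChain.nil⟩
    · rintro ⟨hk, -⟩
      exact ⟨hk, List.IsChain.singleton _⟩
  | cons r t =>
    simp only [IsPrimc, List.mem_cons, forall_eq_or_imp, top, List.headD_cons, CanFollow]
    refine (and_congr_right' List.isChain_cons_cons).trans ?_
    tauto

lemma fst_le_wt {l : List CPart} {p : CPart} (hp : p ∈ l) : p.1 ≤ wt l :=
  List.single_le_sum (fun _ _ => Nat.zero_le _) _ (List.mem_map_of_mem hp)

lemma IsPrimc.length_le_wt {l : List CPart} (hl : IsPrimc l) : l.length ≤ wt l := by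
  simpa [wt] using List.length_le_sum_of_one_le (l.map Prod.fst) (by simpa using hl.1)

def primcSet (n : ℕ) (P : CPart → Prop) : Set (List CPart) :=
  {l | IsPrimc l ∧ wt l = n ∧ P (top l)}

lemma finite_primcSet (n : ℕ) (P : CPart → Prop) : (primcSet n P).Finite := by
  have h : primcSet n P ⊆
      (List.map fun p : Fin (n + 1) × Colour => ((p.1 : ℕ), p.2)) ''
        {l | l.length ≤ n} := by
    rintro l ⟨hl, rfl, -⟩
    refine ⟨l.attach.map fun p => (⟨p.1.1, Nat.lt_succ_of_le (fst_le_wt p.2)⟩, p.1.2),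
      ?_, ?_⟩
    · simpa using hl.length_le_wt
    · simp [List.map_attach_eq_pmap, List.map_pmap, List.pmap_eq_map]
  exact ((List.finite_length_le _ n).image _).subset h

noncomputable def primcSeries (P : CPart → Prop) : R :=
  mk fun n => ∑ᶠ l ∈ primcSet n P, mono l

lemma G_eq_primcSeries (k : ℕ) (x : Colour) :
    G k x = primcSeries fun p => pos p ≤ pos (k, x) := by
  ext n : 1
  rw [G, primcSeries, coeff_mk, coeff_mk]
  exact finsum_set_coe_eq_finsum_mem (s := primcSet n fun p => pos p ≤ pos (k, x)) (f := mono)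

lemma E_eq_primcSeries (k : ℕ) (x : Colour) : E k x = primcSeries (· = (k, x)) := by
  ext n : 1
  rw [E, primcSeries, coeff_mk, coeff_mk]
  exact finsum_set_coe_eq_finsum_mem (s := primcSet n (· = (k, x))) (f := mono)

lemma primcSeries_congr {P Q : CPart → Prop} (h : ∀ p, P p ↔ Q p) :
    primcSeries P = primcSeries Q := by
  rw [funext fun p => propext (h p)]

lemma primcSeries_or {P Q : CPart → Prop} (h : ∀ p, P p → ¬ Q p) :
    primcSeries (fun p => P p ∨ Q p) = primcSeries P + primcSeries Q := by
  ext n : 1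
  have hunion : primcSet n (fun p => P p ∨ Q p) = primcSet n P ∪ primcSet n Q := by
    ext l
    simp only [primcSet, Set.mem_union, Set.mem_ofPred_eq, and_or_left]
  have hdisj : Disjoint (primcSet n P) (primcSet n Q) :=
    Set.disjoint_left.2 fun l hP hQ => h _ hP.2.2 hQ.2.2
  simp only [primcSeries, map_add, coeff_mk, hunion]
  exact finsum_mem_union hdisj (finite_primcSet n P) (finite_primcSet n Q)

lemma primcSet_subset_nil {n : ℕ} {P : CPart → Prop} (h : ∀ p, P p → p.1 = 0) :
    primcSet n P ⊆ {[]} := by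
  rintro (_ | ⟨p, t⟩) ⟨hl, -, hP⟩
  · rfl
  · have := (isPrimc_cons_iff.1 hl).1
    have := h p hP
    omega

lemma primcSeries_eq_zero {P : CPart → Prop} (h : ∀ p, P p → p.1 = 0) (h₀ : ¬ P (0, 1)) :
    primcSeries P = 0 := by
  ext n : 1
  have : primcSet n P = ∅ :=
    Set.eq_empty_of_forall_notMem fun l hl => h₀ (by
      obtain rfl : l = [] := primcSet_subset_nil h hl
      exact hl.2.2)
  simp [primcSeries, this]

lemma primcSeries_eq_one {P : CPart → Prop} (h : ∀ p, P p → p.1 = 0) (h₀ : P (0, 1)) :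
    primcSeries P = 1 := by
  ext n : 1
  have hnil : [] ∈ primcSet 0 P := ⟨⟨by simp, List.IsChain.nil⟩, rfl, h₀⟩
  rcases n with _ | n
  · have : primcSet 0 P = {[]} :=
      (Set.subset_singleton_iff_eq.1 (primcSet_subset_nil h)).resolve_left
        (Set.nonempty_of_mem hnil).ne_empty
    simp [primcSeries, this, mono, nc]
  · have : primcSet (n + 1) P = ∅ :=
      Set.eq_empty_of_forall_notMem fun l hl => by
        obtain rfl : l = [] := primcSet_subset_nil h hl
        exact absurd hl.2.1 (by simp [wt])
    simp [primcSeries, this, coeff_one]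

noncomputable def colourVar (x : Colour) : R0 :=
  if x = 0 then av else if x = 2 then cv else if x = 3 then dv else 1

lemma mono_cons (p : CPart) (t : List CPart) : mono (p :: t) = colourVar p.2 * mono t := by
  obtain ⟨k, x⟩ := p
  fin_cases x <;> simp [mono, nc, colourVar, pow_succ] <;> ring

lemma mem_primcSet_top_eq_iff {n k : ℕ} {x : Colour} {l : List CPart} :
    l ∈ primcSet n (· = (k + 1, x)) ↔
      k + 1 ≤ n ∧
        ∃ t ∈ primcSet (n - (k + 1)) (CanFollow (k + 1) x), (k + 1, x) :: t = l := by
  constructor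
  · rintro ⟨hl, rfl, htop⟩
    obtain ⟨p, t, rfl⟩ : ∃ p t, l = p :: t := by
      cases l with
      | nil => simp [top] at htop
      | cons p t => exact ⟨p, t, rfl⟩
    obtain rfl : p = (k + 1, x) := htop
    obtain ⟨-, hcan, ht⟩ := isPrimc_cons_iff.1 hl
    simp only [wt, List.map_cons, List.sum_cons]
    exact ⟨by omega, t, ⟨ht, by rw [wt]; omega, hcan⟩, rfl⟩
  · rintro ⟨hn, t, ⟨ht, hw, hcan⟩, rfl⟩
    refine ⟨isPrimc_cons_iff.2 ⟨by simp, hcan, ht⟩, ?_, rfl⟩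
    simp only [wt, List.map_cons, List.sum_cons] at hw ⊢
    omega

lemma primcSeries_top_eq (k : ℕ) (x : Colour) :
    primcSeries (· = (k + 1, x)) =
      C (colourVar x) * qq ^ (k + 1) * primcSeries (CanFollow (k + 1) x) := by
  ext n : 1
  rw [mul_comm (C _), mul_assoc, qq, coeff_X_pow_mul', coeff_C_mul]
  split_ifs with hn
  · have : primcSet n (· = (k + 1, x)) =
        List.cons (k + 1, x) '' primcSet (n - (k + 1)) (CanFollow (k + 1) x) := by
      ext l
      simp only [mem_primcSet_top_eq_iff, hn, true_and, Set.mem_image]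
    simp only [primcSeries, coeff_mk, this]
    rw [finsum_mem_image List.cons_injective.injOn, mul_finsum_mem' _ _ (finite_primcSet _ _)]
    simp only [mono_cons]
  · have : primcSet n (· = (k + 1, x)) = ∅ :=
      Set.eq_empty_of_forall_notMem fun l hl => hn (mem_primcSet_top_eq_iff.1 hl).1
    simp [primcSeries, this]

lemma pos_le_iff_of_succ_eq {p p' r : CPart} (h : pos p' + 1 = pos p) :
    pos r ≤ pos p ↔ pos r ≤ pos p' ∨ r = p := by
  refine ⟨fun hr => ?_, by rintro (hr | rfl) <;> omega⟩
  rcases hr.lt_or_eq with hr | hr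
  · exact .inl (by omega)
  · exact .inr (pos_injective hr)

lemma G_eq_G_add_E {p p' : CPart} (h : pos p' + 1 = pos p) :
    G p.1 p.2 = G p'.1 p'.2 + E p.1 p.2 := by
  rw [G_eq_primcSeries, G_eq_primcSeries, E_eq_primcSeries,
    primcSeries_congr fun r => pos_le_iff_of_succ_eq h]
  exact primcSeries_or fun r hr hp => by subst hp; omega

lemma G_succ_a (k : ℕ) : G (k + 1) 0 = G k 3 + E (k + 1) 0 :=
  G_eq_G_add_E (p := (k + 1, 0)) (p' := (k, 3)) (by simp [pos]; omega)

lemma G_b (k : ℕ) : G k 1 = G k 0 + E k 1 :=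
  G_eq_G_add_E (p := (k, 1)) (p' := (k, 0)) (by simp [pos])

lemma G_c (k : ℕ) : G k 2 = G k 1 + E k 2 :=
  G_eq_G_add_E (p := (k, 2)) (p' := (k, 1)) (by simp [pos])

lemma G_d (k : ℕ) : G k 3 = G k 2 + E k 3 :=
  G_eq_G_add_E (p := (k, 3)) (p' := (k, 2)) (by simp [pos])

noncomputable def followers (k : ℕ) (x : Colour) : R := primcSeries (CanFollow k x)

lemma E_succ (k : ℕ) (x : Colour) :
    E (k + 1) x = C (colourVar x) * qq ^ (k + 1) * followers (k + 1) x := by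
  rw [E_eq_primcSeries, primcSeries_top_eq, followers]

lemma canFollow_succ_succ_a_iff (k : ℕ) (r : CPart) :
    CanFollow (k + 2) 0 r ↔ CanFollow (k + 1) 1 r := by
  obtain ⟨m, i⟩ := r
  fin_cases i <;> simp [CanFollow, pos, Dmat] <;> omega

lemma canFollow_succ_b_iff (k : ℕ) (r : CPart) :
    CanFollow (k + 1) 1 r ↔ pos r ≤ pos (k, 3) ∨ r = (k + 1, 1) := by
  obtain ⟨m, i⟩ := r
  fin_cases i <;> simp [CanFollow, pos, Dmat, Prod.ext_iff] <;> omega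

lemma pos_le_succ_c_iff (k : ℕ) (r : CPart) :
    pos r ≤ pos (k + 1, 2) ↔ (CanFollow (k + 1) 2 r ∨ r = (k + 1, 1)) ∨ r = (k, 3) := by
  obtain ⟨m, i⟩ := r
  fin_cases i <;> simp [CanFollow, pos, Dmat, Prod.ext_iff] <;> omega

lemma canFollow_d_iff (k : ℕ) (r : CPart) : CanFollow k 3 r ↔ CanFollow k 2 r := by
  obtain ⟨m, i⟩ := r
  fin_cases i <;> simp [CanFollow, pos, Dmat] <;> omega

lemma followers_succ_succ_a (k : ℕ) : followers (k + 2) 0 = followers (k + 1) 1 :=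
  primcSeries_congr (canFollow_succ_succ_a_iff k)

lemma followers_succ_b (k : ℕ) : followers (k + 1) 1 = G k 3 + E (k + 1) 1 := by
  rw [followers, primcSeries_congr (canFollow_succ_b_iff k), G_eq_primcSeries, E_eq_primcSeries]
  exact primcSeries_or fun r hr hp => by subst hp; simp [pos] at hr; omega

lemma G_succ_c (k : ℕ) : G (k + 1) 2 = followers (k + 1) 2 + E (k + 1) 1 + E k 3 := by
  rw [G_eq_primcSeries, primcSeries_congr (pos_le_succ_c_iff k), E_eq_primcSeries,
    E_eq_primcSeries, primcSeries_or, primcSeries_or, followers]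
  · rintro r hr rfl; simp [CanFollow, Dmat] at hr
  · rintro r (hr | rfl) h
    · subst h; simp [CanFollow, pos, Dmat] at hr
    · simp [Prod.ext_iff] at h

lemma followers_d (k : ℕ) : followers k 3 = followers k 2 :=
  primcSeries_congr (canFollow_d_iff k)

lemma followers_one_a : followers 1 0 = 1 := by
  refine primcSeries_eq_one (fun ⟨m, i⟩ hr => ?_) (by simp [CanFollow, pos, Dmat])
  fin_cases i <;> simp [CanFollow, pos, Dmat] at hr ⊢
  omega

lemma followers_zero_c : followers 0 2 = 0 :=
  primcSeries_eq_zero (fun r hr => by have := hr.2; omega) (by simp [CanFollow, Dmat])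

lemma G_zero_d : G 0 3 = 1 := by
  rw [G_eq_primcSeries]
  exact primcSeries_eq_one (fun r hr => by simp [pos] at hr; omega) (by simp [pos])

lemma E_zero_d : E 0 3 = 0 := by
  rw [E_eq_primcSeries]
  exact primcSeries_eq_zero (fun r hr => by simp [hr]) (by simp)

lemma isUnit_one_sub_qq_pow (k : ℕ) : IsUnit (1 - qq ^ (k + 1)) :=
  isUnit_one_sub (by simp [qq])

lemma E_succ_b (k : ℕ) : E (k + 1) 1 = qq ^ (k + 1) * followers (k + 2) 0 := by
  simp [E_succ, colourVar, followers_succ_succ_a]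

lemma one_sub_mul_followers_succ_succ_a (k : ℕ) :
    (1 - qq ^ (k + 1)) * followers (k + 2) 0 = G k 3 := by
  linear_combination followers_succ_succ_a k + followers_succ_b k + E_succ_b k

lemma coeff_fser (k : ℕ) : coeff k fser = followers (k + 1) 0 := by
  rcases k with _ | k
  · simp [fser, followers_one_a]
  · rw [fser, coeff_mk, if_neg k.succ_ne_zero, Nat.add_sub_cancel, H, eq_comm,
      Ring.eq_mul_inverse_iff_mul_eq _ _ _ (isUnit_one_sub_qq_pow k), mul_comm]
    exact one_sub_mul_followers_succ_succ_a k

lemma E_d (k : ℕ) : E k 3 = C dv * qq ^ k * followers k 2 := by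
  rcases k with _ | k
  · simp [E_zero_d, followers_zero_c]
  · simp [E_succ, colourVar, followers_d]

lemma G_succ_d (k : ℕ) :
    G (k + 1) 3 = (1 + C dv * qq ^ (k + 1)) * followers (k + 1) 2
      + qq ^ (k + 1) * followers (k + 2) 0 + C dv * qq ^ k * followers k 2 := by
  linear_combination G_d (k + 1) + G_succ_c k + E_d (k + 1) + E_d k + E_succ_b k

lemma one_sub_mul_followers_succ_c (k : ℕ) :
    (1 - C cv * qq ^ (k + 1)) * followers (k + 1) 2 =
      (1 - qq ^ (k + 1)) * followers (k + 2) 0 + C av * qq ^ (k + 1) * followers (k + 1) 0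
        - C dv * qq ^ k * followers k 2 := by
  have hc : E (k + 1) 2 = C cv * qq ^ (k + 1) * followers (k + 1) 2 := by
    simp [E_succ, colourVar]
  have ha : E (k + 1) 0 = C av * qq ^ (k + 1) * followers (k + 1) 0 := by
    simp [E_succ, colourVar]
  linear_combination G_c (k + 1) + G_b (k + 1) + G_succ_a k + hc + ha - G_succ_c k - E_d k
    - one_sub_mul_followers_succ_succ_a k

noncomputable def wser : R⟦X⟧ := mk fun k => followers k 2

lemma fser_sub_rescale : fser - rescale qq fser =
    X * (wser + rescale qq fser + C (C dv) * ((1 + X) * rescale qq wser)) := by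
  ext n : 1
  rcases n with _ | _ | k <;>
    simp only [map_sub, map_add, add_mul, one_mul, coeff_zero_X_mul, coeff_succ_X_mul,
      coeff_C_mul, coeff_rescale, coeff_fser, wser, coeff_mk]
  · simp
  · simp only [zero_add, followers_one_a, followers_zero_c]
    linear_combination one_sub_mul_followers_succ_succ_a 0 + G_zero_d
  · linear_combination one_sub_mul_followers_succ_succ_a (k + 1) + G_succ_d k

lemma wser_sub_rescale : wser - C (C cv) * rescale qq wser = fser - rescale qq fser
    + X * (C (C av * qq) * rescale qq fser - C (C dv) * rescale qq wser) := by
  ext n : 1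
  rcases n with _ | k <;>
    simp only [map_sub, map_add, coeff_zero_X_mul, coeff_succ_X_mul, coeff_C_mul, coeff_rescale,
      coeff_fser, wser, coeff_mk]
  · simp [followers_zero_c]
  · linear_combination one_sub_mul_followers_succ_c k

lemma fser_qdifference : C qq * ((1 - X) * fser) =
    (C qq + C (C cv) + C ((C av + C dv) * qq ^ 2) * X ^ 2) * rescale qq fser
      + (1 + C qq * X) * (C (C av * C dv * qq ^ 3) * X ^ 2 - C (C cv))
        * rescale qq (rescale qq fser) := by
  have e₁ := fser_sub_rescale
  have e₂ := wser_sub_rescale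
  have τe₁ := congrArg (rescale qq) e₁
  have τe₂ := congrArg (rescale qq) e₂
  simp only [map_sub, map_add, map_mul, rescale_X, rescale_C, map_one] at τe₁ τe₂
  simp only [map_mul] at e₂
  simp only [map_add, map_mul, map_pow]
  linear_combination C qq * e₁ + C qq * X * e₂ + (C (C dv) * C qq * X - C (C cv)) * τe₁
    + C (C dv) * C qq * X * (1 + C qq * X) * τe₂

/-- `(−x;q)_M`. -/
noncomputable def negxqPartial (M : ℕ) : R⟦X⟧ :=
  ∏ j ∈ range M, (1 + X * C (qq ^ j))

lemma negxqPartial_succ (M : ℕ) :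
    negxqPartial (M + 1) = (1 + X) * rescale qq (negxqPartial M) := by
  rw [negxqPartial, negxqPartial, prod_range_succ', map_prod, pow_zero, map_one, mul_one,
    mul_comm]
  congr 1
  refine prod_congr rfl fun j _ => ?_
  rw [map_add, map_one, map_mul, rescale_X, rescale_C, pow_succ', map_mul]
  ring

lemma qq_pow_dvd_coeff_negxqPartial_sub {M M' : ℕ} (h : M ≤ M') (n : ℕ) :
    qq ^ M ∣ coeff n (negxqPartial M' - negxqPartial M) := by
  induction M', h using Nat.le_induction with
  | base => simp
  | succ M' hM ih =>
    have hstep : negxqPartial (M' + 1) - negxqPartial M' =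
        (negxqPartial M' * X) * C (qq ^ M') := by
      rw [negxqPartial, prod_range_succ, ← negxqPartial]
      ring
    rw [show negxqPartial (M' + 1) - negxqPartial M =
      (negxqPartial (M' + 1) - negxqPartial M') + (negxqPartial M' - negxqPartial M) by ring,
      map_add, hstep, coeff_mul_C]
    exact dvd_add (dvd_mul_of_dvd_right (pow_dvd_pow qq hM) _) ih

lemma qq_pow_dvd_coeff_negxq_sub (M n : ℕ) : qq ^ M ∣ coeff n (negxq - negxqPartial M) := by
  rw [qq, X_pow_dvd_iff]
  intro m hm
  have hM := qq_pow_dvd_coeff_negxqPartial_sub (M := m + 1) hm n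
  rw [qq, X_pow_dvd_iff] at hM
  have := hM m m.lt_succ_self
  simp only [map_sub, negxq, coeff_mk, negxqPartial] at this ⊢
  linear_combination -this

lemma negxq_eq : negxq = (1 + X) * rescale qq negxq := by
  -- Both sides agree with the exact identity for `negxqPartial (M + 1)` modulo every `q ^ M`.
  rw [← sub_eq_zero]
  ext n : 1
  rw [map_zero]
  refine eq_zero_of_forall_X_pow_dvd fun M => ?_
  have hsplit : negxq - (1 + X) * rescale qq negxq =
      (negxq - negxqPartial (M + 1)) - (1 + X) * rescale qq (negxq - negxqPartial M) := by
    rw [negxqPartial_succ, map_sub]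
    ring
  rw [hsplit, map_sub]
  exact dvd_sub ((pow_dvd_pow qq M.le_succ).trans (qq_pow_dvd_coeff_negxq_sub _ _))
    (dvd_coeff_mul_left (dvd_coeff_rescale (qq_pow_dvd_coeff_negxq_sub M) _) _ _)

lemma constantCoeff_negxq : constantCoeff negxq = 1 := by
  rw [← coeff_zero_eq_constantCoeff_apply, negxq, coeff_mk]
  ext m : 1
  simp [coeff_zero_eq_constantCoeff_apply, map_prod]

lemma isUnit_negxq : IsUnit negxq := by
  simp [isUnit_iff_constantCoeff, constantCoeff_negxq]

lemma fser_eq_negxq_mul_gser : fser = negxq * gser := by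
  rw [gser, mul_left_comm, Ring.mul_inverse_cancel _ isUnit_negxq, mul_one]

lemma gser_qdifference : C qq * ((1 - X ^ 2) * gser) =
    (C qq + C (C cv) + C ((C av + C dv) * qq ^ 2) * X ^ 2) * rescale qq gser
      + (C (C av * C dv * qq ^ 3) * X ^ 2 - C (C cv)) * rescale qq (rescale qq gser) := by
  have hu : IsUnit ((1 + C qq * X) * rescale qq (rescale qq negxq)) := by
    simp [isUnit_iff_constantCoeff, constantCoeff_rescale, constantCoeff_negxq]
  have hN := negxq_eq
  have τN := congrArg (rescale qq) negxq_eq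
  have hf := fser_eq_negxq_mul_gser
  have τf := congrArg (rescale qq) hf
  have ττf := congrArg (rescale qq) τf
  simp only [map_mul, map_add, map_one, rescale_X] at τN τf ττf
  -- As `negxq = (1 + x)(1 + qx) negxq(q²x)`, multiplying by this unit gives `fser_qdifference`.
  refine hu.mul_left_cancel ?_
  linear_combination fser_qdifference - C qq * (1 - X) * hf - C qq * (1 - X) * gser * hN
    - C qq * (1 - X ^ 2) * gser * τN
    + (C qq + C (C cv) + C ((C av + C dv) * qq ^ 2) * X ^ 2) * (τf + rescale qq gser * τN)
    + (1 + C qq * X) * (C (C av * C dv * qq ^ 3) * X ^ 2 - C (C cv)) * ττf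

lemma qq_ne_zero : qq ≠ 0 := X_ne_zero

lemma coeff_gser_succ_succ (m : ℕ) :
    (1 - qq ^ (m + 2)) * (1 - C cv * qq ^ (m + 1)) * coeff (m + 2) gser =
      (1 + C av * qq ^ (m + 1)) * (1 + C dv * qq ^ (m + 1)) * coeff m gser := by
  have h := congrArg (coeff (m + 2)) gser_qdifference
  simp only [map_add, map_sub, map_mul, sub_mul, add_mul, one_mul, mul_assoc,
    coeff_C_mul, coeff_X_pow_mul, coeff_rescale] at h
  refine mul_left_cancel₀ qq_ne_zero ?_
  linear_combination h

lemma one_sub_C_cv_ne_zero : 1 - C cv ≠ 0 := by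
  intro h
  have := congrArg (fun f => MvPolynomial.coeff 0 (constantCoeff f)) h
  simp [cv] at this

lemma coeff_gser_one : coeff 1 gser = 0 := by
  have h := congrArg (coeff 1) gser_qdifference
  simp only [map_add, map_sub, map_mul, sub_mul, add_mul, one_mul, mul_assoc,
    coeff_C_mul, coeff_X_pow_mul', coeff_rescale] at h
  norm_num at h
  refine (mul_eq_zero.1 ?_).resolve_left
    (mul_ne_zero qq_ne_zero
      (mul_ne_zero (isUnit_one_sub_qq_pow 0).ne_zero one_sub_C_cv_ne_zero))
  linear_combination h

lemma coeff_gser_zero : coeff 0 gser = 1 := by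
  have h := congrArg (coeff 0) fser_eq_negxq_mul_gser
  rw [coeff_fser, zero_add, followers_one_a, coeff_zero_eq_constantCoeff_apply, map_mul,
    constantCoeff_negxq, one_mul] at h
  rw [coeff_zero_eq_constantCoeff_apply, ← h]

lemma isUnit_recurrence_coeff (m : ℕ) :
    IsUnit ((1 - qq ^ (m + 2)) * (1 - C cv * qq ^ (m + 1))) :=
  (isUnit_one_sub_qq_pow (m + 1)).mul (isUnit_one_sub (by simp [qq]))

/-- Writing `g(x) = ∑_{n ≥ 0} a_n xⁿ` with `a_n ∈ R`: for all `n ≥ 0`, `a_{2n+1} = 0` and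
`a_{2n} = (−aq;q²)_n (−dq;q²)_n / ((q²;q²)_n (cq;q²)_n)`, the denominator being invertible in
`R` (its inverse given by `Ring.inverse`) since it has constant term `1`. -/
theorem statement17 (n : ℕ) :
    PowerSeries.coeff (2 * n + 1) gser = 0 ∧
    PowerSeries.coeff (2 * n) gser =
      (∏ j ∈ Finset.range n, (1 + PowerSeries.C av * qq ^ (2 * j + 1))) *
        (∏ j ∈ Finset.range n, (1 + PowerSeries.C dv * qq ^ (2 * j + 1))) *
        Ring.inverse ((∏ j ∈ Finset.range n, (1 - qq ^ (2 * j + 2))) *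
          ∏ j ∈ Finset.range n, (1 - PowerSeries.C cv * qq ^ (2 * j + 1))) := by
  refine ⟨odd_eq_zero_of_recurrence (u := (coeff · gser)) coeff_gser_succ_succ
    isUnit_recurrence_coeff coeff_gser_one n, ?_⟩
  rw [← prod_mul_distrib, ← prod_mul_distrib, Ring.eq_mul_inverse_iff_mul_eq _ _ _
    (IsUnit.prod_iff.2 fun m _ => isUnit_recurrence_coeff (2 * m)), mul_comm,
    prod_mul_eq_prod_mul_of_recurrence (u := (coeff · gser)) coeff_gser_succ_succ,
    coeff_gser_zero, mul_one]

end Primc
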